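/- Let X ~ N(0, I_p) and let σ(t) = e^t/(1+e^t). For every ε > 0 there exists δ > 0 such that if (α, β) ∈ R^p × R satisfies E[(1/2 − σ(α·X + β))^2] ≤ δ^2, then ‖α‖_2 + |β| ≤ ε. -/

import Mathlib

/-!
Under `X ~ N(0, I_p)` the score `α · X + β` has law `N(β, ‖α‖²)`, so the question is about a
one-dimensional Gaussian `Y`. As `(1/2 - σ t)²` increases with `|t|`, Markov's inequality turns a
small loss into `P(|Y| < c) ≥ 9/10`. A Gaussian puts mass `1/2` on each side of its mean, which
forces `|β| ≤ c`; its density is at most `1 / √(2π‖α‖²)`, which forces `‖α‖ ≤ c`.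
-/

open MeasureTheory ProbabilityTheory Set
open scoped NNReal

namespace Real

lemma sq_half_sub_sigmoid_pos {c : ℝ} (hc : c ≠ 0) : 0 < (1 / 2 - sigmoid c) ^ 2 := by
  have hne : sigmoid c ≠ 1 / 2 := fun h =>
    hc (sigmoid_injective (by rw [h, sigmoid_zero]; norm_num))
  exact sq_pos_of_ne_zero (sub_ne_zero.mpr hne.symm)

lemma sq_half_sub_sigmoid_abs (t : ℝ) :
    (1 / 2 - sigmoid |t|) ^ 2 = (1 / 2 - sigmoid t) ^ 2 := by
  rcases abs_choice t with h | h <;> rw [h]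
  rw [sigmoid_neg]
  ring

lemma sq_half_sub_sigmoid_le_of_le_abs {c t : ℝ} (hc : 0 ≤ c) (h : c ≤ |t|) :
    (1 / 2 - sigmoid c) ^ 2 ≤ (1 / 2 - sigmoid t) ^ 2 := by
  rw [← sq_half_sub_sigmoid_abs t]
  have hhalf : 1 / 2 ≤ sigmoid c := by simpa using sigmoid_le hc
  nlinarith [sigmoid_le h]

lemma integrable_sq_half_sub_sigmoid (μ : Measure ℝ) [IsFiniteMeasure μ] :
    Integrable (fun t => (1 / 2 - sigmoid t) ^ 2) μ := by
  refine Integrable.of_bound (by fun_prop) 1 (ae_of_all _ fun t => ?_)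
  rw [norm_of_nonneg (sq_nonneg _)]
  nlinarith [sigmoid_pos t, sigmoid_lt_one t]

lemma sq_half_sub_sigmoid_mul_measureReal_le_integral (μ : Measure ℝ) [IsFiniteMeasure μ]
    {c : ℝ} (hc : 0 ≤ c) :
    (1 / 2 - sigmoid c) ^ 2 * μ.real {t | c ≤ |t|} ≤ ∫ t, (1 / 2 - sigmoid t) ^ 2 ∂μ := by
  have hsub : {t | c ≤ |t|} ⊆ {t | (1 / 2 - sigmoid c) ^ 2 ≤ (1 / 2 - sigmoid t) ^ 2} :=
    fun _ ht => sq_half_sub_sigmoid_le_of_le_abs hc ht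
  calc _ ≤ (1 / 2 - sigmoid c) ^ 2 *
          μ.real {t | (1 / 2 - sigmoid c) ^ 2 ≤ (1 / 2 - sigmoid t) ^ 2} :=
        mul_le_mul_of_nonneg_left (measureReal_mono hsub) (sq_nonneg _)
    _ ≤ _ := mul_meas_ge_le_integral_of_nonneg (ae_of_all _ fun _ => sq_nonneg _)
        (integrable_sq_half_sub_sigmoid μ) _

end Real

namespace ProbabilityTheory

lemma gaussianReal_real_Ioi_mean_eq (m : ℝ) (v : ℝ≥0) :
    (gaussianReal m v).real (Ioi m) = (gaussianReal m v).real (Iio m) := by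
  have hreflect : (gaussianReal m v).map (fun x => 2 * m - x) = gaussianReal m v := by
    rw [gaussianReal_map_const_sub]
    ring_nf
  have hpre : (fun x => 2 * m - x) ⁻¹' Ioi m = Iio m := by
    ext x
    simp only [mem_preimage, mem_Ioi, mem_Iio]
    constructor <;> intro h <;> linarith
  conv_lhs => rw [← hreflect, map_measureReal_apply (by fun_prop) measurableSet_Ioi, hpre]

lemma gaussianReal_real_Iio_mean_le_half (m : ℝ) (v : ℝ≥0) :
    (gaussianReal m v).real (Iio m) ≤ 1 / 2 := by
  have hunion := measureReal_union (μ := gaussianReal m v)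
    ((Iic_disjoint_Ioi le_rfl).mono_left Iio_subset_Iic_self) measurableSet_Ioi
  rw [gaussianReal_real_Ioi_mean_eq] at hunion
  linarith [measureReal_le_one (μ := gaussianReal m v) (s := Iio m ∪ Ioi m)]

lemma gaussianReal_real_Ioi_mean_le_half (m : ℝ) (v : ℝ≥0) :
    (gaussianReal m v).real (Ioi m) ≤ 1 / 2 :=
  gaussianReal_real_Ioi_mean_eq m v ▸ gaussianReal_real_Iio_mean_le_half m v

lemma gaussianReal_le_mul_volume (m : ℝ) {v : ℝ≥0} (hv : v ≠ 0) (s : Set ℝ) :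
    gaussianReal m v s ≤ ENNReal.ofReal (√(2 * Real.pi * v))⁻¹ * volume s := by
  rw [gaussianReal_apply m hv s, ← setLIntegral_const]
  refine lintegral_mono fun x => ENNReal.ofReal_le_ofReal ?_
  rw [gaussianPDFReal]
  exact mul_le_of_le_one_right (by positivity)
    (Real.exp_le_one_iff.mpr (by rw [neg_div, neg_nonpos]; positivity))

lemma gaussianReal_real_Ioo_le (m : ℝ) {v : ℝ≥0} (hv : v ≠ 0) {a b : ℝ} (hab : a ≤ b) :
    (gaussianReal m v).real (Ioo a b) ≤ (b - a) / √(2 * Real.pi * v) := by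
  have h := gaussianReal_le_mul_volume m hv (Ioo a b)
  rw [Real.volume_Ioo, ← ENNReal.ofReal_mul (by positivity)] at h
  rw [measureReal_def, div_eq_inv_mul]
  exact ENNReal.toReal_le_of_le_ofReal (by positivity) h

lemma gaussianReal_map_pi_sum_mul_add {ι : Type*} [Fintype ι] (α : ι → ℝ) (β : ℝ) :
    (Measure.pi fun _ : ι => gaussianReal 0 1).map (fun x => ∑ i, α i * x i + β)
      = gaussianReal β (∑ i, α i ^ 2).toNNReal := by
  have h : (fun x : ι → ℝ => ∑ i, α i * x i + β)
      = (· + β) ∘ innerSL ℝ (WithLp.toLp 2 α) ∘ WithLp.toLp 2 := by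
    ext x
    simp [PiLp.inner_apply, mul_comm]
  rw [h, ← Measure.map_map (by fun_prop) (by fun_prop),
    ← Measure.map_map (by fun_prop) (by fun_prop), map_pi_eq_stdGaussian,
    IsGaussian.map_eq_gaussianReal, integral_strongDual_stdGaussian, variance_dual_stdGaussian,
    innerSL_apply_norm, EuclideanSpace.norm_sq_eq, gaussianReal_map_add_const]
  simp

open Real in
theorem abs_mean_le_and_sqrt_variance_le_of_integral_sq_half_sub_sigmoid_le
    {m c : ℝ} {v : ℝ≥0} (hc : 0 < c)
    (h : ∫ t, (1 / 2 - sigmoid t) ^ 2 ∂gaussianReal m v ≤ (1 / 2 - sigmoid c) ^ 2 / 10) :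
    |m| ≤ c ∧ √(v : ℝ) ≤ c := by
  set μ := gaussianReal m v
  have hfar : μ.real {t | c ≤ |t|} ≤ 1 / 10 := by
    have := sq_half_sub_sigmoid_mul_measureReal_le_integral μ hc.le
    nlinarith [sq_half_sub_sigmoid_pos hc.ne']
  have hnear : 9 / 10 ≤ μ.real (Ioo (-c) c) := by
    have hcompl : Ioo (-c) c = {t | c ≤ |t|}ᶜ := by
      ext
      simp [abs_lt]
    rw [hcompl, probReal_compl_eq_one_sub (measurableSet_le measurable_const measurable_abs)]
    linarith
  constructor
  · by_contra! hm
    have hhalf : μ.real (Ioo (-c) c) ≤ 1 / 2 := by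
      rcases lt_abs.mp hm with hm | hm
      · exact (measureReal_mono (Ioo_subset_Iio_self.trans (Iio_subset_Iio hm.le))).trans
          (gaussianReal_real_Iio_mean_le_half m v)
      · exact (measureReal_mono (Ioo_subset_Ioi_self.trans (Ioi_subset_Ioi (by linarith)))).trans
          (gaussianReal_real_Ioi_mean_le_half m v)
    linarith
  · by_contra! hv
    have hv0 : v ≠ 0 := by
      rintro rfl
      simp at hv
      linarith
    have hdensity := gaussianReal_real_Ioo_le m hv0 (neg_le_self hc.le)
    -- Mass `9/10` on an interval of length `2c < 2√v` would force `9/10 ≤ 2 / √(2π)`.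
    have hpi : 12 / 5 < √(2 * π) := by
      rw [lt_sqrt (by norm_num)]
      nlinarith [pi_gt_three]
    rw [sqrt_mul (by positivity), le_div_iff₀ (by positivity)] at hdensity
    nlinarith [mul_lt_mul hpi hv.le hc (by positivity)]

end ProbabilityTheory

theorem logistic_strong_identifiability_gaussian
    {p : ℕ}
    (ν : Measure (Fin p → ℝ))
    (hν : ν = Measure.pi fun _ : Fin p => gaussianReal 0 1)
    (σ : ℝ → ℝ) (hσ : ∀ t, σ t = Real.exp t / (1 + Real.exp t)) :
    ∀ ε > (0 : ℝ), ∃ δ > (0 : ℝ), ∀ (α : Fin p → ℝ) (β : ℝ),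
      (∫ x, (1 / 2 - σ ((∑ i, α i * x i) + β)) ^ 2 ∂ν) ≤ δ ^ 2 →
      Real.sqrt (∑ i, (α i) ^ 2) + |β| ≤ ε := by
  have hσ_eq : σ = Real.sigmoid := funext fun t => by
    rw [hσ, Real.sigmoid_def, Real.exp_neg]
    field_simp
    ring
  subst hν hσ_eq
  intro ε hε
  have hq := Real.sq_half_sub_sigmoid_pos (half_pos hε).ne'
  refine ⟨√((1 / 2 - Real.sigmoid (ε / 2)) ^ 2 / 10),
    Real.sqrt_pos.mpr (div_pos hq (by norm_num)), fun α β h => ?_⟩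
  have hlaw : ∫ x, (1 / 2 - Real.sigmoid (∑ i, α i * x i + β)) ^ 2
        ∂(Measure.pi fun _ : Fin p => gaussianReal 0 1)
      = ∫ t, (1 / 2 - Real.sigmoid t) ^ 2 ∂gaussianReal β (∑ i, α i ^ 2).toNNReal := by
    rw [← gaussianReal_map_pi_sum_mul_add,
      integral_map (by fun_prop : Measurable _).aemeasurable (by fun_prop)]
  rw [hlaw, Real.sq_sqrt (by positivity)] at h
  obtain ⟨hβ, hα⟩ :=
    abs_mean_le_and_sqrt_variance_le_of_integral_sq_half_sub_sigmoid_le (half_pos hε) h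
  rw [Real.coe_toNNReal _ (by positivity)] at hα
  linarith
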